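/- For every integer k ≥ 1 and every element α ∈ E'_{k+1}, the Hankel determinant at the lower left corner of the parallelogram U_{k} satisfies H_{α−f_{2k+3}+1, f_{2k}} = (−1)^k · (H_{α−f_{2k+3}+2, f_{2k}−1} − H_{α−f_{2k+3}+1, f_{2k}−1}). -/

import Mathlib

/-- The substitution τ: 1 → 101, 0 → 1 on the alphabet {0,1}. -/
def tau (b : ℕ) : List ℕ := if b = 1 then [1, 0, 1] else [1]

/-- The iterated word τ^n(1). -/
def tauIter : ℕ → List ℕ
  | 0 => [1]
  | n + 1 => ((tauIter n).map tau).flatten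

/-- `s` is the fixed point of τ beginning with 1: it agrees with every
iterate `τ^n(1)` on its length. -/
def IsFixedSeq (s : ℕ → ℕ) : Prop :=
  ∀ n j, j < (tauIter n).length → s j = (tauIter n).getD j 0

/-- The sequence (f_n): f_0 = 1, f_1 = 2, f_{2n+2} = f_{2n} + f_{2n+1},
f_{2n+3} = f_{2n} + f_{2n+2}. -/
def IsFSeq (f : ℕ → ℕ) : Prop :=
  f 0 = 1 ∧ f 1 = 2 ∧ (∀ n, f (2*n+2) = f (2*n) + f (2*n+1)) ∧
    (∀ n, f (2*n+3) = f (2*n) + f (2*n+2))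

/-- `a` is the f-representation of `n`: digits in {0,1}, finitely supported,
a_i a_{i+1} = 0 for all i, a_i a_{i+2} = 0 for even i, and n = Σ a_i f_i. -/
def IsFRep (f : ℕ → ℕ) (n : ℕ) (a : ℕ → ℕ) : Prop :=
  (∀ i, a i ≤ 1) ∧ (∀ i, a i * a (i+1) = 0) ∧
  (∀ i, Even i → a i * a (i+2) = 0) ∧
  ∃ N, (∀ i, N ≤ i → a i = 0) ∧ n = ∑ i ∈ Finset.range N, a i * f i

/-- The truncated f-representation Φ_k(n) = Σ_{i=0}^{2k+2} a_i(n) f_i. -/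
def Phi (f : ℕ → ℕ) (a : ℕ → ℕ → ℕ) (k n : ℕ) : ℕ :=
  ∑ i ∈ Finset.range (2*k+3), a n i * f i

/-- The Hankel determinant H_{m,n} = det (s_{m+i+j})_{0 ≤ i,j ≤ n-1}. -/
def H (s : ℕ → ℕ) (m n : ℕ) : ℤ :=
  (Matrix.of fun i j : Fin n => (s (m + i.1 + j.1) : ℤ)).det

/-!
Write `pell n` for the Pell number `P_{n+1}` (1, 2, 5, 12, …) and `tauLen n = |τⁿ(1)|`
(1, 3, 7, 17, …), so that `f (2n) = tauLen n` and `f (2n+1) = 2 pell n`. From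
`τⁿ⁺²(1) = τⁿ⁺¹(1) τⁿ(1) τⁿ⁺¹(1)`, both `tauLen n` and `2 pell n` are periods of `s` on explicit
initial windows, and `s (pell n) = n mod 2`. An `α ∈ E'_{k+1}` is `pell (k+2) + β` with `β` a sum
of f-digits of index `≥ 2k+5`, and these periods show that adding `β` does not change `s` below
`pell (k+2)`. Hence in the Hankel matrix of size `f (2k)` at `α + 1 - f (2k+3) = pell k + 1 + β`
the last column equals the column `f (2k-2) - 1` plus `(-1)ᵏ (e_first - e_last)`, and expanding
along it gives the identity.
-/

namespace Matrix

variable {R : Type*} [CommRing R]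

theorem det_eq_of_col_last_eq_add {n : ℕ} (A : Matrix (Fin (n + 1)) (Fin (n + 1)) R)
    {q : Fin (n + 1)} (hq : q ≠ Fin.last n) (c : R)
    (hmid : ∀ i, i ≠ 0 → i ≠ Fin.last n → A i (Fin.last n) = A i q)
    (htop : A 0 (Fin.last n) = A 0 q + c)
    (hbot : A (Fin.last n) (Fin.last n) = A (Fin.last n) q - c) :
    A.det = c * ((-1) ^ n * (A.submatrix Fin.succ Fin.castSucc).det -
      (A.submatrix Fin.castSucc Fin.castSucc).det) := by
  have h0 : (0 : Fin (n + 1)) ≠ Fin.last n := by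
    intro h
    rw [Fin.ext_iff, Fin.val_zero, Fin.val_last] at h
    subst h
    exact hq (Fin.ext (by omega))
  set v : Fin (n + 1) → R := fun i => A i (Fin.last n) - A i q
  set B := A.updateCol (Fin.last n) v
  have hAB : A = B.updateCol (Fin.last n) fun i => B i (Fin.last n) + B i q := by
    ext i j
    rcases eq_or_ne j (Fin.last n) with rfl | hj
    · simp [B, v, updateCol_ne hq]
    · simp [B, updateCol_ne hj]
  have hdet : A.det = B.det := by
    conv_lhs => rw [hAB]
    exact det_updateCol_add_self _ hq.symm
  rw [hdet, det_succ_column _ (Fin.last n),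
    Finset.sum_eq_add_of_mem 0 (Fin.last n) (Finset.mem_univ _) (Finset.mem_univ _) h0
      fun i _ hi => by simp [B, v, hmid i hi.1 hi.2]]
  have hsub : ∀ r : Fin n → Fin (n + 1),
      (B.submatrix r (Fin.last n).succAbove) = A.submatrix r Fin.castSucc := by
    intro r; ext i j; simp [B, Fin.succAbove_last]
  rw [hsub, hsub, Fin.succAbove_zero, Fin.succAbove_last]
  simp [B, v, htop, hbot, ← two_mul, pow_mul]
  ring

def hankel (u : ℕ → R) (m n : ℕ) : Matrix (Fin n) (Fin n) R :=
  of fun i j => u (m + i + j)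

theorem det_hankel_succ (u : ℕ → R) {m n q : ℕ} (hq : q < n) (c : R)
    (hmid : ∀ i, 0 < i → i < n → u (m + i + n) = u (m + i + q))
    (htop : u (m + n) = u (m + q) + c) (hbot : u (m + n + n) = u (m + n + q) - c) :
    (hankel u m (n + 1)).det =
      c * ((-1) ^ n * (hankel u (m + 1) n).det - (hankel u m n).det) := by
  have hsucc : (hankel u m (n + 1)).submatrix Fin.succ Fin.castSucc = hankel u (m + 1) n := by
    ext i j; simp [hankel]; ring_nf
  have hcast : (hankel u m (n + 1)).submatrix Fin.castSucc Fin.castSucc = hankel u m n := by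
    ext i j; simp [hankel]
  rw [← hsucc, ← hcast]
  refine det_eq_of_col_last_eq_add _ (q := ⟨q, by omega⟩) (Fin.ne_of_lt hq) c
    (fun i hi₀ hi => ?_) (by simpa [hankel] using htop) (by simpa [hankel] using hbot)
  have := Fin.val_lt_last hi
  simpa [hankel] using hmid i (Fin.pos_iff_ne_zero.2 hi₀) this

end Matrix

lemma neg_one_pow_succ_eq_mod_two_sub (n : ℕ) :
    (-1 : ℤ) ^ (n + 1) = ((n % 2 : ℕ) : ℤ) - ((n + 1) % 2 : ℕ) := by
  rcases Nat.even_or_odd n with h | h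
  · rw [pow_succ, h.neg_one_pow, Nat.even_iff.1 h, Nat.succ_mod_two_eq_one_iff.2 (Nat.even_iff.1 h)]
    norm_num
  · rw [pow_succ, h.neg_one_pow, Nat.odd_iff.1 h, Nat.succ_mod_two_eq_zero_iff.2 (Nat.odd_iff.1 h)]
    norm_num

mutual
def pell : ℕ → ℕ
  | 0 => 1
  | n + 1 => pell n + tauLen n
def tauLen : ℕ → ℕ
  | 0 => 1
  | n + 1 => 2 * pell n + tauLen n
end

@[simp] lemma pell_zero : pell 0 = 1 := by simp [pell]
@[simp] lemma tauLen_zero : tauLen 0 = 1 := by simp [tauLen]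
lemma pell_succ (n : ℕ) : pell (n + 1) = pell n + tauLen n := by simp [pell]
lemma tauLen_succ (n : ℕ) : tauLen (n + 1) = 2 * pell n + tauLen n := by simp [tauLen]

lemma pell_tauLen_expand (n : ℕ) :
    pell (n + 1) = pell n + tauLen n ∧ tauLen (n + 1) = 2 * pell n + tauLen n ∧
    pell (n + 2) = 3 * pell n + 2 * tauLen n ∧ tauLen (n + 2) = 4 * pell n + 3 * tauLen n ∧
    pell (n + 3) = 7 * pell n + 5 * tauLen n ∧ tauLen (n + 3) = 10 * pell n + 7 * tauLen n := by
  refine ⟨pell_succ n, tauLen_succ n, ?_⟩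
  simp only [pell_succ, tauLen_succ]
  omega

lemma pell_pos (n : ℕ) : 0 < pell n := by
  induction n with
  | zero => simp
  | succ n ih => rw [pell_succ]; omega

lemma tauLen_odd (n : ℕ) : Odd (tauLen n) := by
  induction n with
  | zero => simp
  | succ n ih => rw [tauLen_succ]; exact (even_two_mul _).add_odd ih

lemma tauLen_pos (n : ℕ) : 0 < tauLen n := (tauLen_odd n).pos

lemma pell_mono : Monotone pell :=
  monotone_nat_of_le_succ fun n => by rw [pell_succ]; omega

lemma tauIter_add_two (n : ℕ) :
    tauIter (n + 2) = tauIter (n + 1) ++ tauIter n ++ tauIter (n + 1) := by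
  induction n with
  | zero => rfl
  | succ n ih =>
    change (tauIter (n + 2)).flatMap tau = _
    conv_lhs => rw [ih, List.flatMap_append, List.flatMap_append]
    rfl

lemma length_tauIter (n : ℕ) : (tauIter n).length = tauLen n := by
  induction n using Nat.strong_induction_on with
  | _ n ih =>
    match n with
    | 0 => rfl
    | 1 => rfl
    | n + 2 =>
      rw [tauIter_add_two, List.length_append, List.length_append, ih n (by omega),
        ih (n + 1) (by omega)]
      simp only [tauLen_succ, pell_succ]
      ring

def IsAdmissible (d : ℕ → ℕ) : Prop :=
  (∀ i, d i ≤ 1) ∧ (∀ i, d i * d (i + 1) = 0) ∧ ∀ i, Even i → d i * d (i + 2) = 0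

lemma IsFRep.isAdmissible {f d : ℕ → ℕ} {n : ℕ} (h : IsFRep f n d) : IsAdmissible d :=
  ⟨h.1, h.2.1, h.2.2.1⟩

namespace IsFSeq

variable {f : ℕ → ℕ}

lemma apply_two_mul_and_add_one (hf : IsFSeq f) (n : ℕ) :
    f (2 * n) = tauLen n ∧ f (2 * n + 1) = 2 * pell n := by
  obtain ⟨h0, h1, h2, h3⟩ := hf
  induction n with
  | zero => simp [h0, h1]
  | succ n ih =>
    have := pell_tauLen_expand n
    have heven : f (2 * (n + 1)) = tauLen (n + 1) := by rw [mul_add, mul_one, h2, ih.1, ih.2]; omega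
    refine ⟨heven, ?_⟩
    rw [show 2 * (n + 1) + 1 = 2 * n + 3 by ring, h3, ih.1, ← mul_add_one, heven]
    omega

lemma apply_two_mul (hf : IsFSeq f) (n : ℕ) : f (2 * n) = tauLen n :=
  (hf.apply_two_mul_and_add_one n).1

lemma apply_two_mul_add_one (hf : IsFSeq f) (n : ℕ) : f (2 * n + 1) = 2 * pell n :=
  (hf.apply_two_mul_and_add_one n).2

lemma apply_succ_eq_add_tauLen (hf : IsFSeq f) {M j : ℕ} (hM : M = 2 * j + 1 ∨ M = 2 * j + 2) :
    f (M + 1) = f M + tauLen j := by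
  rw [← hf.apply_two_mul]
  obtain ⟨-, -, h2, h3⟩ := hf
  rcases hM with rfl | rfl
  · rw [h2, add_comm]
  · rw [h3, add_comm]

lemma monotone (hf : IsFSeq f) : Monotone f := by
  obtain ⟨h0, h1, h2, h3⟩ := hf
  refine monotone_nat_of_le_succ fun n => ?_
  obtain ⟨j, rfl | rfl⟩ := Nat.even_or_odd' n
  · rcases j with _ | j
    · simp [h0, h1]
    · rw [show 2 * (j + 1) + 1 = 2 * j + 3 by ring, h3, mul_add_one]
      omega
  · rw [h2]
    omega

lemma sum_range_lt (hf : IsFSeq f) {d : ℕ → ℕ} (hd : IsAdmissible d) (t : ℕ) :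
    ∑ i ∈ Finset.range t, d i * f i < f t := by
  have ⟨h₀, h₁, h₂, h₃⟩ := hf
  obtain ⟨hd₁, hd₂, hd₃⟩ := hd
  induction t using Nat.strong_induction_on with
  | _ t ih =>
    rcases t with _ | t
    · simp [h₀]
    rw [Finset.sum_range_succ]
    rcases Nat.le_one_iff_eq_zero_or_eq_one.1 (hd₁ t) with hdt | hdt
    · rw [hdt, zero_mul, add_zero]
      exact (ih t (by omega)).trans_le (hf.monotone t.le_succ)
    rw [hdt, one_mul]
    obtain ⟨j, rfl | rfl⟩ := Nat.even_or_odd' t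
    · rcases j with _ | j
      · simp [h₀, h₁]
      rw [show 2 * (j + 1) = 2 * j + 2 by ring] at hdt ⊢
      have hz₁ : d (2 * j + 1) = 0 := by simpa [hdt] using hd₂ (2 * j + 1)
      have hz₀ : d (2 * j) = 0 := by simpa [hdt] using hd₃ (2 * j) (even_two_mul j)
      rw [Finset.sum_range_succ, Finset.sum_range_succ, hz₀, hz₁, h₃]
      simpa using ih (2 * j) (by omega)
    · have hz₀ : d (2 * j) = 0 := by simpa [hdt] using hd₂ (2 * j)
      rw [Finset.sum_range_succ, hz₀, h₂]
      simpa using ih (2 * j) (by omega)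

end IsFSeq

lemma IsFRep.exists_eq_sum_range_add {f d : ℕ → ℕ} {n : ℕ} (h : IsFRep f n d) (t : ℕ) :
    ∃ M, n = ∑ i ∈ Finset.range t, d i * f i + ∑ i ∈ Finset.Ico t M, d i * f i := by
  obtain ⟨-, -, -, N, hN, rfl⟩ := h
  refine ⟨max N t, ?_⟩
  rw [Finset.sum_range_add_sum_Ico _ (le_max_right N t)]
  exact Finset.sum_subset (Finset.range_subset_range.2 (le_max_left N t))
    fun i _ hi => by rw [hN i (by simpa using hi), zero_mul]


lemma H_add_eq_det_hankel (s : ℕ → ℕ) (m β n : ℕ) :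
    H s (m + β) n = (Matrix.hankel (fun t => (s (t + β) : ℤ)) m n).det := by
  unfold H Matrix.hankel
  congr 2
  ext i j
  ring_nf

namespace IsFixedSeq

variable {s : ℕ → ℕ}

lemma eq_getD (hs : IsFixedSeq s) {n x : ℕ} (hx : x < tauLen n) :
    s x = (tauIter n).getD x 0 :=
  hs n x (by rwa [length_tauIter])

lemma apply_tauLen_add (hs : IsFixedSeq s) {n y : ℕ} (hy : y < tauLen n) :
    s (tauLen (n + 1) + y) = s y := by
  have := pell_tauLen_expand n
  rw [hs.eq_getD (n := n + 2) (by omega), tauIter_add_two,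
    List.getD_append _ _ _ _ (by simp only [List.length_append, length_tauIter]; omega),
    List.getD_append_right _ _ _ _ (by rw [length_tauIter]; omega), length_tauIter,
    Nat.add_sub_cancel_left, ← hs.eq_getD hy]

lemma apply_two_mul_pell_add (hs : IsFixedSeq s) {n y : ℕ} (hy : y < tauLen n) :
    s (2 * pell n + y) = s y := by
  obtain _ | n := n
  · obtain rfl : y = 0 := by simpa using hy
    rw [hs.eq_getD (n := 1) (by decide), hs.eq_getD (n := 0) (by decide)]
    decide
  have := pell_tauLen_expand n
  rw [hs.eq_getD (n := n + 2) (by omega), tauIter_add_two,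
    List.getD_append_right _ _ _ _ (by simp only [List.length_append, length_tauIter]; omega)]
  simp only [List.length_append, length_tauIter]
  rw [show 2 * pell (n + 1) + y - (tauLen (n + 1) + tauLen n) = y by omega, ← hs.eq_getD hy]

lemma apply_add_tauLen (hs : IsFixedSeq s) {n x : ℕ} (hx : x + 2 ≤ pell n) :
    s (x + tauLen n) = s x := by
  induction n using Nat.strong_induction_on generalizing x with
  | _ n ih =>
    match n with
    | 0 => simp at hx
    | 1 =>
      obtain rfl : x = 0 := by simp [pell_succ] at hx; omega
      rw [hs.eq_getD (n := 2) (x := 0 + tauLen 1) (by decide), hs.eq_getD (n := 0) (by decide)]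
      decide
    | n + 2 =>
      have := pell_tauLen_expand n
      rcases lt_or_ge x (tauLen (n + 1)) with hx₁ | hx₁
      · rw [add_comm, hs.apply_tauLen_add hx₁]
      rcases lt_or_ge x (2 * pell (n + 1)) with hx₂ | hx₂
      · obtain ⟨y, rfl⟩ := Nat.exists_eq_add_of_le hx₁
        rw [show tauLen (n + 1) + y + tauLen (n + 2) = 2 * pell (n + 2) + y by omega,
          hs.apply_two_mul_pell_add (by omega), hs.apply_tauLen_add (by omega)]
      · obtain ⟨u, rfl⟩ := Nat.exists_eq_add_of_le hx₂
        rw [show 2 * pell (n + 1) + u + tauLen (n + 2) = 2 * pell (n + 2) + (u + tauLen n) by omega,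
          hs.apply_two_mul_pell_add (by omega), ih n (by omega) (by omega),
          hs.apply_two_mul_pell_add (by omega)]

lemma apply_add_two_mul_pell (hs : IsFixedSeq s) {n x : ℕ} (hx : x + 2 ≤ pell (n + 1)) :
    s (x + 2 * pell n) = s x := by
  obtain _ | n := n
  · obtain rfl : x = 0 := by simp [pell_succ] at hx; omega
    rw [hs.eq_getD (n := 1) (by decide), hs.eq_getD (n := 0) (by decide)]
    decide
  rw [show n + 1 + 1 = n + 2 by rfl] at hx
  have := pell_tauLen_expand n
  rcases lt_or_ge x (tauLen (n + 1)) with hx₁ | hx₁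
  · rw [add_comm, hs.apply_two_mul_pell_add hx₁]
  rcases lt_or_ge x (2 * pell (n + 1)) with hx₂ | hx₂
  · obtain ⟨y, rfl⟩ := Nat.exists_eq_add_of_le hx₁
    rw [show tauLen (n + 1) + y + 2 * pell (n + 1) = tauLen (n + 2) + y by omega,
      hs.apply_tauLen_add (by omega), hs.apply_tauLen_add (by omega)]
  · obtain ⟨z, rfl⟩ := Nat.exists_eq_add_of_le hx₂
    rw [show 2 * pell (n + 1) + z + 2 * pell (n + 1) = tauLen (n + 2) + (z + tauLen n) by omega,
      hs.apply_tauLen_add (by omega), hs.apply_add_tauLen (by omega),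
      hs.apply_two_mul_pell_add (by omega)]

lemma apply_add_tauLen_of_pell_lt (hs : IsFixedSeq s) {n x : ℕ} (hx₀ : pell n < x)
    (hx₁ : x < tauLen (n + 1)) : s (x + tauLen n) = s x := by
  induction n using Nat.strong_induction_on generalizing x with
  | _ n ih =>
    match n with
    | 0 =>
      obtain rfl : x = 2 := by simp [tauLen_succ] at hx₀ hx₁; omega
      rw [hs.eq_getD (n := 2) (by decide), hs.eq_getD (n := 2) (by decide)]
      decide
    | 1 =>
      rw [show pell 1 = 2 by rfl] at hx₀
      rw [show tauLen (1 + 1) = 7 by rfl] at hx₁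
      rw [show tauLen 1 = 3 by rfl, hs.eq_getD (n := 3) (by rw [show tauLen 3 = 17 by rfl]; omega),
        hs.eq_getD (n := 3) (by rw [show tauLen 3 = 17 by rfl]; omega)]
      interval_cases x <;> decide
    | n + 2 =>
      rw [show n + 2 + 1 = n + 3 by rfl] at hx₁
      have := pell_tauLen_expand n
      rcases lt_or_ge x (tauLen (n + 2)) with hx₂ | hx₂
      · obtain ⟨w, rfl⟩ := Nat.exists_eq_add_of_le (show 2 * pell (n + 1) ≤ x by omega)
        rw [show 2 * pell (n + 1) + w + tauLen (n + 2) = 2 * pell (n + 2) + (w + tauLen n) by omega,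
          hs.apply_two_mul_pell_add (by omega), ih n (by omega) (by omega) (by omega),
          hs.apply_two_mul_pell_add (by omega)]
      rcases lt_or_ge x (2 * pell (n + 2)) with hx₃ | hx₃
      · obtain ⟨t, rfl⟩ := Nat.exists_eq_add_of_le hx₂
        rw [show tauLen (n + 2) + t + tauLen (n + 2) = 2 * pell (n + 2) + (t + 2 * pell (n + 1))
            by omega, hs.apply_two_mul_pell_add (by omega),
          hs.apply_add_two_mul_pell (show t + 2 ≤ pell (n + 2) by omega),
          hs.apply_tauLen_add (by omega)]
      · obtain ⟨u, rfl⟩ := Nat.exists_eq_add_of_le hx₃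
        rw [show 2 * pell (n + 2) + u + tauLen (n + 2) = tauLen (n + 3) + u by omega,
          hs.apply_tauLen_add (by omega), hs.apply_two_mul_pell_add (by omega)]

lemma apply_add_two_mul_pell_of_lt (hs : IsFixedSeq s) {n x : ℕ}
    (hx₀ : pell (n + 1) + tauLen n < x)
    (hx₁ : x + 2 ≤ pell (n + 1) + tauLen (n + 1) + tauLen n) :
    s (x + 2 * pell n) = s x := by
  obtain _ | n := n
  · obtain rfl : x = 4 := by simp [pell_succ, tauLen_succ] at hx₀ hx₁; omega
    rw [hs.eq_getD (n := 2) (by decide), hs.eq_getD (n := 2) (by decide)]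
    decide
  rw [show n + 1 + 1 = n + 2 by rfl] at hx₀ hx₁
  have := pell_tauLen_expand n
  rcases lt_or_ge x (2 * pell (n + 2)) with hx₂ | hx₂
  · obtain ⟨y, rfl⟩ := Nat.exists_eq_add_of_le (show tauLen (n + 2) ≤ x by omega)
    rw [show tauLen (n + 2) + y + 2 * pell (n + 1) = 2 * pell (n + 2) + (y + tauLen n) by omega,
      hs.apply_two_mul_pell_add (by omega), hs.apply_add_tauLen_of_pell_lt (by omega) (by omega),
      hs.apply_tauLen_add (by omega)]
  obtain ⟨u, rfl⟩ := Nat.exists_eq_add_of_le hx₂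
  rcases lt_or_ge (u + 2 * pell (n + 1)) (tauLen (n + 2)) with hu | hu
  · rw [add_assoc, hs.apply_two_mul_pell_add hu,
      hs.apply_add_two_mul_pell (show u + 2 ≤ pell (n + 2) by omega),
      hs.apply_two_mul_pell_add (by omega)]
  · obtain ⟨w, hw⟩ := Nat.exists_eq_add_of_le hu
    rw [show 2 * pell (n + 2) + u + 2 * pell (n + 1) = tauLen (n + 3) + w by omega,
      hs.apply_tauLen_add (by omega), hs.apply_two_mul_pell_add (by omega),
      show u = w + tauLen (n + 1) by omega, hs.apply_add_tauLen (by omega)]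

lemma apply_add_sum_Ico (hs : IsFixedSeq s) {f d : ℕ → ℕ} (hf : IsFSeq f) (hd : IsAdmissible d)
    {c x : ℕ} (hx : x < pell c) (M : ℕ) :
    s (x + ∑ i ∈ Finset.Ico (2 * c + 1) M, d i * f i) = s x := by
  induction M with
  | zero => simp
  | succ M ih =>
    rcases lt_or_ge M (2 * c + 1) with hM | hM
    · rw [Finset.Ico_eq_empty (by omega), Finset.sum_empty, add_zero]
    rw [Finset.sum_Ico_succ_top hM, ← add_assoc]
    rcases Nat.le_one_iff_eq_zero_or_eq_one.1 (hd.1 M) with hdM | hdM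
    · rw [hdM, zero_mul, add_zero, ih]
    rw [hdM, one_mul, ← ih]
    obtain ⟨j, hj⟩ : ∃ j, M = 2 * j + 1 ∨ M = 2 * j + 2 := ⟨(M - 1) / 2, by omega⟩
    set y := x + ∑ i ∈ Finset.Ico (2 * c + 1) M, d i * f i
    -- the digits below the top one sum to less than `f (M + 1) - f M = tauLen j`
    have hy : y + 2 ≤ pell (j + 1) := by
      have h₁ : ∑ i ∈ Finset.Ico (2 * c + 1) M, d i * f i ≤ ∑ i ∈ Finset.range M, d i * f i :=
        Finset.sum_le_sum_of_subset fun i hi => Finset.mem_range.2 (Finset.mem_Ico.1 hi).2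
      have h₂ := hf.sum_range_lt hd (M + 1)
      rw [Finset.sum_range_succ, hdM, one_mul, hf.apply_succ_eq_add_tauLen hj] at h₂
      have h₃ := pell_mono (show c ≤ j by omega)
      rw [pell_succ]
      omega
    rcases hj with rfl | rfl
    · rw [hf.apply_two_mul_add_one, hs.apply_add_two_mul_pell hy]
    · rw [show 2 * j + 2 = 2 * (j + 1) by ring, hf.apply_two_mul, hs.apply_add_tauLen hy]

lemma exists_eq_sum_range_add_of_isFRep (hs : IsFixedSeq s) {f d : ℕ → ℕ} (hf : IsFSeq f)
    {n : ℕ} (h : IsFRep f n d) (c : ℕ) :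
    ∃ β, n = ∑ i ∈ Finset.range (2 * c + 1), d i * f i + β ∧ ∀ x < pell c, s (x + β) = s x := by
  obtain ⟨M, hM⟩ := h.exists_eq_sum_range_add (2 * c + 1)
  exact ⟨_, hM, fun x hx => hs.apply_add_sum_Ico hf h.isAdmissible hx M⟩

lemma apply_pell (hs : IsFixedSeq s) (n : ℕ) : s (pell n) = n % 2 := by
  induction n using Nat.twoStepInduction with
  | zero => rw [pell_zero, hs.eq_getD (n := 1) (by decide)]; decide
  | one => rw [show pell 1 = 2 by rfl, hs.eq_getD (n := 1) (by decide)]; decide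
  | more n ih _ =>
    have := pell_tauLen_expand n
    have := pell_pos n
    rw [show pell (n + 2) = 2 * pell (n + 1) + pell n by omega,
      hs.apply_two_mul_pell_add (by omega), ih]
    omega

lemma apply_pell_sub_one (hs : IsFixedSeq s) (n : ℕ) : s (pell n - 1) = (n + 1) % 2 := by
  induction n using Nat.twoStepInduction with
  | zero => rw [pell_zero, hs.eq_getD (n := 1) (by decide)]; decide
  | one => rw [show pell 1 = 2 by rfl, hs.eq_getD (n := 1) (by decide)]; decide
  | more n ih _ =>
    have := pell_tauLen_expand n
    have := pell_pos n
    rw [show pell (n + 2) - 1 = 2 * pell (n + 1) + (pell n - 1) by omega,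
      hs.apply_two_mul_pell_add (by omega), ih]
    omega

lemma apply_pell_succ_add_tauLen (hs : IsFixedSeq s) (n : ℕ) :
    s (pell (n + 1) + tauLen n) = (n + 1) % 2 := by
  rcases n with _ | n
  · rw [show pell 1 + tauLen 0 = 3 by rfl, hs.eq_getD (n := 2) (by decide)]; decide
  rw [show n + 1 + 1 = n + 2 by rfl]
  have := pell_tauLen_expand n
  have := pell_pos n
  rw [show pell (n + 2) + tauLen (n + 1) = tauLen (n + 2) + pell n by omega,
    hs.apply_tauLen_add (by omega), hs.apply_pell]
  omega

lemma H_lower_left_corner (hs : IsFixedSeq s) (K β : ℕ)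
    (hβ : ∀ x < pell (K + 3), s (x + β) = s x) :
    H s (pell (K + 1) + 1 + β) (tauLen (K + 1)) =
      (-1) ^ (K + 1) * (H s (pell (K + 1) + 1 + 1 + β) (tauLen (K + 1) - 1) -
        H s (pell (K + 1) + 1 + β) (tauLen (K + 1) - 1)) := by
  have := pell_tauLen_expand K
  have := pell_pos K
  have := tauLen_pos K
  obtain ⟨n, hn⟩ : ∃ n, tauLen (K + 1) = n + 1 := ⟨tauLen (K + 1) - 1, by omega⟩
  have hneven : Even n := by simpa [hn, Nat.odd_add_one] using tauLen_odd (K + 1)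
  have hu : ∀ x < pell (K + 3), ((s (x + β) : ℕ) : ℤ) = s x := fun x hx => by rw [hβ x hx]
  rw [hn, Nat.add_sub_cancel, H_add_eq_det_hankel, H_add_eq_det_hankel, H_add_eq_det_hankel,
    Matrix.det_hankel_succ _ (q := tauLen K - 1) (by omega) ((-1) ^ (K + 1)) ?mid ?top ?bot,
    hneven.neg_one_pow, one_mul]
  case mid =>
    intro i hi₀ hi
    rw [hu _ (by omega), hu _ (by omega),
      show pell (K + 1) + 1 + i + n = pell (K + 1) + tauLen K + i + 2 * pell K by omega,
      hs.apply_add_two_mul_pell_of_lt (by omega) (by omega),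
      show pell (K + 1) + 1 + i + (tauLen K - 1) = pell (K + 1) + tauLen K + i by omega]
  case top =>
    rw [hu _ (by omega), hu _ (by omega),
      show pell (K + 1) + 1 + n = pell (K + 2) by omega, hs.apply_pell,
      show pell (K + 1) + 1 + (tauLen K - 1) = pell (K + 1) + tauLen K by omega,
      hs.apply_pell_succ_add_tauLen, neg_one_pow_succ_eq_mod_two_sub]
    push_cast
    omega
  case bot =>
    rw [hu _ (by omega), hu _ (by omega),
      show pell (K + 1) + 1 + n + n = tauLen (K + 2) + (pell K - 1) by omega,
      hs.apply_tauLen_add (by omega), hs.apply_pell_sub_one,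
      show pell (K + 1) + 1 + n + (tauLen K - 1) = 2 * pell (K + 1) + (pell (K + 1) - 1) by omega,
      hs.apply_two_mul_pell_add (by omega), hs.apply_pell_sub_one, neg_one_pow_succ_eq_mod_two_sub]
    push_cast
    omega

end IsFixedSeq

theorem lower_left_corner_U (f : ℕ → ℕ) (hf : IsFSeq f) (s : ℕ → ℕ) (hs : IsFixedSeq s) (a : ℕ → ℕ → ℕ) (ha : ∀ n, IsFRep f n (a n)) :
    ∀ k α : ℕ, 1 ≤ k →
      Phi f a (k+1) α = f (2*k+5) / 2 →
      H s (α + 1 - f (2*k+3)) (f (2*k)) =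
        (-1 : ℤ)^k * (H s (α + 2 - f (2*k+3)) (f (2*k) - 1) -
          H s (α + 1 - f (2*k+3)) (f (2*k) - 1)) := by
  intro k α hk hΦ
  obtain ⟨K, rfl⟩ : ∃ K, k = K + 1 := ⟨k - 1, by omega⟩
  obtain ⟨β, hα, hβ⟩ := hs.exists_eq_sum_range_add_of_isFRep hf (ha α) (K + 3)
  have hΦ' : Phi f a (K + 1 + 1) α = pell (K + 3) := by
    rw [hΦ, show 2 * (K + 1) + 5 = 2 * (K + 3) + 1 by ring, hf.apply_two_mul_add_one]
    omega
  rw [Phi, show 2 * (K + 1 + 1) + 3 = 2 * (K + 3) + 1 by ring] at hΦ'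
  have := pell_tauLen_expand K
  rw [show 2 * (K + 1) + 3 = 2 * (K + 2) + 1 by ring, hf.apply_two_mul_add_one, hf.apply_two_mul,
    show α + 1 - 2 * pell (K + 2) = pell (K + 1) + 1 + β by omega,
    show α + 2 - 2 * pell (K + 2) = pell (K + 1) + 1 + 1 + β by omega]
  exact hs.H_lower_left_corner K β hβ
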